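/- (Achievability bound in the proof of Theorem 4, case ℓ = 0, u = M.) Assume A is nonempty and proper, and let c_i ∈ (0,1], i ∈ [M], be constants such that for every i ∈ [M] and every ρ ∈ (0, c_i), ∑_n P_A(π_i(n) < ρ) < ∞. Then for every ε > 0 small enough that (c_i − ε)·I_i − ε > 0 for all i ∈ A and (c_j − ε)·J_j − ε > 0 for all j ∉ A, there exists a finite constant C_ε such that for all a, b > 0: E_A[T(a,b)] ≤ max over i ∈ A and j ∉ A of max{ b/((c_i − ε)·I_i − ε), a/((c_j − ε)·J_j − ε) } + C_ε. -/

import Mathlib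

open MeasureTheory ProbabilityTheory Real Filter Set
open scoped ENNReal Topology

/-!
For each source `i` let `G_i` be its log-likelihood ratio, signed so that its mean under the true
law is `m_i = I_i` (for `i ∈ A`) or `m_i = J_i` (for `i ∉ A`), and put `ρ_i = c_i - ε`,
`θ_i = ρ_i m_i - ε`. Call time `n` bad for `i` if the sampled sum `∑_{k ≤ n} R_i(k) G_i(X_i(k))`
is below `θ_i n`. Once `n ≥ max(b/θ_i, a/θ_j)` and no source is bad, every `Λ_i(n)` has left
`(-a, b)`, so `T` is at most that threshold plus the number of bad times, and it suffices that
the bad probabilities are summable.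

Since `θ_i < ρ_i m_i` and `t ↦ log E[e^{-t G_i}]` has derivative `-m_i` at `0`, some tilt
`t ∈ (0, 1]` gives `ρ_i log φ < -t θ_i` with `φ = E[e^{-t G_i}]`. Because `R_i(k)` is previsible
and `X_i(k)` is independent of the past, `exp (∑_k R_i(k) (-t G_i(X_i(k)) - log φ))` has
expectation at most `1`; by Markov, a bad time `n` with `π_i(n) ≥ ρ_i` has probability at most
`exp (-n (-t θ_i - ρ_i log φ))`, which is summable, while `π_i(n) < ρ_i` is summable by hypothesis.
-/

lemma exp_neg_mul_le {t : ℝ} (ht : t ∈ Icc (0 : ℝ) 1) (y : ℝ) :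
    exp (-(t * y)) ≤ t * exp (-y) + (1 - t) := by
  have := convexOn_exp.2 (mem_univ (-y)) (mem_univ 0) ht.1 (sub_nonneg.2 ht.2) (by ring)
  simpa [smul_eq_mul, mul_neg] using this

lemma abs_exp_neg_mul_sub_one_div_le {t : ℝ} (ht : t ∈ Ioc (0 : ℝ) 1) (y : ℝ) :
    |(exp (-(t * y)) - 1) / t| ≤ |y| + exp (-y) + 1 := by
  have hlow : -y ≤ (exp (-(t * y)) - 1) / t := by
    rw [le_div_iff₀ ht.1]
    linarith [add_one_le_exp (-(t * y))]
  have hup : (exp (-(t * y)) - 1) / t ≤ exp (-y) - 1 := by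
    rw [div_le_iff₀ ht.1]
    linarith [exp_neg_mul_le (Ioc_subset_Icc_self ht) y]
  rw [abs_le]
  constructor <;> linarith [le_abs_self y, abs_nonneg y, exp_pos (-y)]

section Tilting

variable {α : Type*} [MeasurableSpace α] {ν : Measure α} {G : α → ℝ}

lemma integrable_exp_neg_mul [IsFiniteMeasure ν] (hG : AEStronglyMeasurable G ν)
    (hexp : Integrable (fun x => exp (-G x)) ν) {t : ℝ} (ht : t ∈ Icc (0 : ℝ) 1) :
    Integrable (fun x => exp (-(t * G x))) ν := by
  refine (hexp.add (integrable_const 1)).mono'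
    (continuous_exp.comp_aestronglyMeasurable (hG.const_mul t).neg) (ae_of_all _ fun x => ?_)
  rw [norm_of_nonneg (exp_pos _).le, Pi.add_apply]
  nlinarith [exp_neg_mul_le ht (G x), exp_pos (-G x), ht.1, ht.2]

lemma tendsto_integral_exp_neg_mul_sub_one_div [IsFiniteMeasure ν] (hG : Integrable G ν)
    (hexp : Integrable (fun x => exp (-G x)) ν) :
    Tendsto (fun t => ∫ x, (exp (-(t * G x)) - 1) / t ∂ν) (𝓝[>] 0) (𝓝 (∫ x, -G x ∂ν)) := by
  refine tendsto_integral_filter_of_dominated_convergence (fun x => |G x| + exp (-G x) + 1)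
    (Eventually.of_forall fun t => ?_)
    (eventually_of_mem (Ioc_mem_nhdsGT one_pos) fun t ht =>
      ae_of_all _ fun x => abs_exp_neg_mul_sub_one_div_le ht (G x))
    ((hG.abs.add hexp).add (integrable_const 1)) (ae_of_all _ fun x => ?_)
  · exact (continuous_exp.comp (continuous_const.mul continuous_id).neg |>.sub
      continuous_const |>.div_const t).comp_aestronglyMeasurable hG.1
  · have hder : HasDerivAt (fun t => exp (-(t * G x))) (-G x) 0 := by
      simpa using ((hasDerivAt_id (0 : ℝ)).mul_const (G x)).neg.exp
    refine hder.tendsto_slope_zero_right.congr fun t => ?_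
    simp [div_eq_inv_mul]

lemma exists_log_integral_exp_neg_mul_lt [IsProbabilityMeasure ν] (hG : Integrable G ν)
    (hexp : Integrable (fun x => exp (-G x)) ν) {s : ℝ} (hs : s < ∫ x, G x ∂ν) :
    ∃ t ∈ Ioc (0 : ℝ) 1, log (∫ x, exp (-(t * G x)) ∂ν) < -(t * s) := by
  have hlim := tendsto_integral_exp_neg_mul_sub_one_div hG hexp
  rw [integral_neg] at hlim
  obtain ⟨t, hlt, ht⟩ :=
    ((hlim.eventually (gt_mem_nhds (neg_lt_neg hs))).and (Ioc_mem_nhdsGT one_pos)).exists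
  have hint := integrable_exp_neg_mul hG.1 hexp (Ioc_subset_Icc_self ht)
  rw [integral_div, integral_sub hint (integrable_const 1), integral_const, probReal_univ,
    one_smul, div_lt_iff₀ ht.1] at hlt
  refine ⟨t, ht, (log_le_sub_one_of_pos (integral_exp_pos hint)).trans_lt ?_⟩
  linarith

end Tilting

section Sampling

variable {Ω : Type*} {mΩ : MeasurableSpace Ω} {P : Measure Ω} (F : Filtration ℕ mΩ)
  {R Y : ℕ → Ω → ℝ}

lemma measurable_sum_sampled (hR : ∀ k, 1 ≤ k → Measurable[F (k - 1)] (R k))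
    (hY : ∀ k, 1 ≤ k → Measurable[F k] (Y k)) (n : ℕ) :
    Measurable[F n] fun ω => ∑ k ∈ Finset.Icc 1 n, R k ω * Y k ω := by
  refine Finset.measurable_sum _ fun k hk => ?_
  obtain ⟨hk1, hkn⟩ := Finset.mem_Icc.1 hk
  exact ((hR k hk1).mono (F.mono (by omega)) le_rfl).mul ((hY k hk1).mono (F.mono hkn) le_rfl)

lemma ofReal_exp_mul_of_eq_zero_or_eq_one {r : ℝ} (hr : r = 0 ∨ r = 1) (y : ℝ) :
    ENNReal.ofReal (exp (r * y))
      = ENNReal.ofReal (1 - r) + ENNReal.ofReal r * ENNReal.ofReal (exp y) := by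
  rcases hr with rfl | rfl <;> simp

lemma lintegral_exp_sum_sampled_le_one [IsProbabilityMeasure P]
    (hR01 : ∀ k ω, R k ω = 0 ∨ R k ω = 1) (hR : ∀ k, 1 ≤ k → Measurable[F (k - 1)] (R k))
    (hY : ∀ k, 1 ≤ k → Measurable[F k] (Y k))
    (hindep : ∀ k, 1 ≤ k → Indep (MeasurableSpace.comap (Y k) inferInstance) (F (k - 1)) P)
    (hexp : ∀ k, 1 ≤ k → ∫⁻ ω, ENNReal.ofReal (exp (Y k ω)) ∂P ≤ 1) (n : ℕ) :
    ∫⁻ ω, ENNReal.ofReal (exp (∑ k ∈ Finset.Icc 1 n, R k ω * Y k ω)) ∂P ≤ 1 := by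
  induction n with
  | zero => simp
  | succ n ih =>
    set E : Ω → ℝ≥0∞ := fun ω => ENNReal.ofReal (exp (∑ k ∈ Finset.Icc 1 n, R k ω * Y k ω))
    have hE : Measurable[F n] E := (measurable_sum_sampled F hR hY n).exp.ennreal_ofReal
    have hRn : Measurable[F n] (R (n + 1)) := hR (n + 1) (by omega)
    have hsplit : ∀ ω, ENNReal.ofReal (exp (∑ k ∈ Finset.Icc 1 (n + 1), R k ω * Y k ω))
        = E ω * ENNReal.ofReal (1 - R (n + 1) ω)
          + E ω * ENNReal.ofReal (R (n + 1) ω) * ENNReal.ofReal (exp (Y (n + 1) ω)) := by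
      intro ω
      rw [Finset.sum_Icc_succ_top (by omega), exp_add, ENNReal.ofReal_mul (exp_pos _).le,
        ofReal_exp_mul_of_eq_zero_or_eq_one (hR01 _ ω)]
      ring
    have hE1 : Measurable fun ω => E ω * ENNReal.ofReal (1 - R (n + 1) ω) :=
      (hE.mul (measurable_const.sub hRn).ennreal_ofReal).mono (F.le n) le_rfl
    have hmul := lintegral_mul_eq_lintegral_mul_lintegral_of_independent_measurableSpace
      (f := fun ω => E ω * ENNReal.ofReal (R (n + 1) ω)) (F.le n)
      (measurable_iff_comap_le.1 ((hY (n + 1) (by omega)).mono (F.le _) le_rfl))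
      (hindep (n + 1) (by omega)).symm (hE.mul hRn.ennreal_ofReal)
      (comap_measurable (Y (n + 1))).exp.ennreal_ofReal
    calc ∫⁻ ω, ENNReal.ofReal (exp (∑ k ∈ Finset.Icc 1 (n + 1), R k ω * Y k ω)) ∂P
        = ∫⁻ ω, E ω * ENNReal.ofReal (1 - R (n + 1) ω) ∂P
          + (∫⁻ ω, E ω * ENNReal.ofReal (R (n + 1) ω) ∂P)
            * ∫⁻ ω, ENNReal.ofReal (exp (Y (n + 1) ω)) ∂P := by
          simp_rw [hsplit]
          rw [lintegral_add_left hE1, hmul]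
      _ ≤ ∫⁻ ω, E ω * ENNReal.ofReal (1 - R (n + 1) ω) ∂P
          + ∫⁻ ω, E ω * ENNReal.ofReal (R (n + 1) ω) ∂P := by
          gcongr
          exact mul_le_of_le_one_right zero_le (hexp (n + 1) (by omega))
      _ = ∫⁻ ω, E ω ∂P := by
          rw [← lintegral_add_left hE1]
          congr 1 with ω
          rw [← mul_add]
          rcases hR01 (n + 1) ω with h | h <;> simp [h]
      _ ≤ 1 := ih

lemma measure_le_sum_sampled_le_exp_neg [IsProbabilityMeasure P]
    (hR01 : ∀ k ω, R k ω = 0 ∨ R k ω = 1) (hR : ∀ k, 1 ≤ k → Measurable[F (k - 1)] (R k))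
    (hY : ∀ k, 1 ≤ k → Measurable[F k] (Y k))
    (hindep : ∀ k, 1 ≤ k → Indep (MeasurableSpace.comap (Y k) inferInstance) (F (k - 1)) P)
    (hexp : ∀ k, 1 ≤ k → ∫⁻ ω, ENNReal.ofReal (exp (Y k ω)) ∂P ≤ 1) (δ : ℝ) (n : ℕ) :
    P {ω | δ ≤ ∑ k ∈ Finset.Icc 1 n, R k ω * Y k ω} ≤ ENNReal.ofReal (exp (-δ)) := by
  have hmeas : Measurable fun ω => ENNReal.ofReal (exp (∑ k ∈ Finset.Icc 1 n, R k ω * Y k ω)) :=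
    ((measurable_sum_sampled F hR hY n).mono (F.le n) le_rfl).exp.ennreal_ofReal
  calc P {ω | δ ≤ ∑ k ∈ Finset.Icc 1 n, R k ω * Y k ω}
      ≤ P {ω | ENNReal.ofReal (exp δ)
          ≤ ENNReal.ofReal (exp (∑ k ∈ Finset.Icc 1 n, R k ω * Y k ω))} :=
        measure_mono fun ω hω => ENNReal.ofReal_le_ofReal (exp_le_exp.2 hω)
    _ ≤ (∫⁻ ω, ENNReal.ofReal (exp (∑ k ∈ Finset.Icc 1 n, R k ω * Y k ω)) ∂P)
          / ENNReal.ofReal (exp δ) :=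
        meas_ge_le_lintegral_div hmeas.aemeasurable (by simp [exp_pos]) ENNReal.ofReal_ne_top
    _ ≤ 1 / ENNReal.ofReal (exp δ) := by
        gcongr
        exact lintegral_exp_sum_sampled_le_one F hR01 hR hY hindep hexp n
    _ = ENNReal.ofReal (exp (-δ)) := by
        rw [one_div, ← ENNReal.ofReal_inv_of_pos (exp_pos δ), exp_neg]

end Sampling

lemma tsum_ofReal_exp_neg_mul_nat_ne_top {δ : ℝ} (hδ : 0 < δ) :
    ∑' n : ℕ, ENNReal.ofReal (exp (-(n * δ))) ≠ ⊤ := by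
  have hgeom : Summable fun n : ℕ => exp (-δ) ^ n :=
    summable_geometric_of_lt_one (exp_pos _).le (exp_lt_one_iff.2 (neg_lt_zero.2 hδ))
  rw [← ENNReal.ofReal_tsum_of_nonneg (fun n => (exp_pos _).le)]
  · exact ENNReal.ofReal_ne_top
  · simpa [← exp_nat_mul, mul_neg] using hgeom

lemma lintegral_ofReal_exp_sub_log_integral_exp {Ω S : Type*} [MeasurableSpace Ω]
    [MeasurableSpace S] {P : Measure Ω} {ν : Measure S} [IsProbabilityMeasure ν] {f : S → ℝ}
    (hf : Measurable f) (hint : Integrable (fun x => exp (f x)) ν) {X : Ω → S}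
    (hX : Measurable X) (hlaw : P.map X = ν) :
    ∫⁻ ω, ENNReal.ofReal (exp (f (X ω) - log (∫ x, exp (f x) ∂ν))) ∂P = 1 := by
  have hpos := integral_exp_pos hint
  have hdiv : (fun x => exp (f x - log (∫ x, exp (f x) ∂ν)))
      = fun x => exp (f x) / ∫ x, exp (f x) ∂ν := by
    simp_rw [exp_sub, exp_log hpos]
  rw [← lintegral_map (hf.sub_const _).exp.ennreal_ofReal hX, hlaw,
    ← ofReal_integral_eq_lintegral_ofReal (by rw [hdiv]; exact hint.div_const _)
      (ae_of_all _ fun x => (exp_pos _).le), hdiv, integral_div, div_self hpos.ne',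
    ENNReal.ofReal_one]

lemma integrable_exp_neg_of_ae_eq_llr {α : Type*} [MeasurableSpace α] {μ ν : Measure α}
    [SigmaFinite μ] [IsFiniteMeasure ν] (hμν : μ ≪ ν) {G : α → ℝ}
    (hG : G =ᵐ[μ] llr μ ν) :
    Integrable (fun x => exp (-G x)) μ := by
  refine (Measure.integrable_toReal_rnDeriv (μ := ν) (ν := μ)).congr ?_
  filter_upwards [hG, exp_neg_llr hμν] with x hx hexp
  rw [hx, hexp]

section SingleSource

variable {Ω : Type*} {mΩ : MeasurableSpace Ω} {P : Measure Ω} [IsProbabilityMeasure P]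
  (F : Filtration ℕ mΩ) {S : Type*} [mS : MeasurableSpace S] {ν : Measure S}
  [IsProbabilityMeasure ν] {X : ℕ → Ω → S} {R : ℕ → Ω → ℝ} {G : S → ℝ}

lemma tsum_measure_sum_sampled_lt_ne_top
    (hX : ∀ n, 1 ≤ n → Measurable[F n] (X n)) (hlaw : ∀ n, 1 ≤ n → P.map (X n) = ν)
    (hindep : ∀ n, 1 ≤ n → Indep (MeasurableSpace.comap (X n) mS) (F (n - 1)) P)
    (hR01 : ∀ k ω, R k ω = 0 ∨ R k ω = 1) (hR : ∀ k, 1 ≤ k → Measurable[F (k - 1)] (R k))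
    (hGm : Measurable G) (hG : Integrable G ν) (hexp : Integrable (fun x => exp (-G x)) ν)
    {θ ρ : ℝ} (hθ : 0 ≤ θ) (hρ : 0 < ρ) (hθρ : θ < ρ * ∫ x, G x ∂ν)
    (hfreq : ∑' n : ℕ, P {ω | (∑ k ∈ Finset.Icc 1 n, R k ω) / n < ρ} ≠ ⊤) :
    ∑' n : ℕ, P {ω | ∑ k ∈ Finset.Icc 1 n, G (X k ω) * R k ω < θ * n} ≠ ⊤ := by
  obtain ⟨t, ht, hlog⟩ :=
    exists_log_integral_exp_neg_mul_lt hG hexp (s := θ / ρ) (by rwa [div_lt_iff₀' hρ])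
  set φ := ∫ x, exp (-(t * G x)) ∂ν
  have hint := integrable_exp_neg_mul hG.1 hexp (Ioc_subset_Icc_self ht)
  have hlogρ : ρ * log φ < -(t * θ) := by
    have := mul_lt_mul_of_pos_left hlog hρ
    rwa [show ρ * -(t * (θ / ρ)) = -(t * θ) by field_simp] at this
  have hlogφ : log φ ≤ 0 := by nlinarith [ht.1]
  set Y : ℕ → Ω → ℝ := fun k ω => -(t * G (X k ω)) - log φ
  have hg : Measurable fun x => -(t * G x) - log φ := (hGm.const_mul t).neg.sub_const _
  have hYexp : ∀ k, 1 ≤ k → ∫⁻ ω, ENNReal.ofReal (exp (Y k ω)) ∂P ≤ 1 := fun k hk =>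
    (lintegral_ofReal_exp_sub_log_integral_exp (hGm.const_mul t).neg hint
      ((hX k hk).mono (F.le k) le_rfl) (hlaw k hk)).le
  have hYindep : ∀ k, 1 ≤ k →
      Indep (MeasurableSpace.comap (Y k) inferInstance) (F (k - 1)) P := fun k hk =>
    indep_of_indep_of_le_left (hindep k hk) (hg.comp (comap_measurable (X k))).comap_le
  set δ := -(t * θ + ρ * log φ)
  have hbad : ∀ n : ℕ, {ω | ∑ k ∈ Finset.Icc 1 n, G (X k ω) * R k ω < θ * n}
      ⊆ {ω | (∑ k ∈ Finset.Icc 1 n, R k ω) / n < ρ}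
        ∪ {ω | n * δ ≤ ∑ k ∈ Finset.Icc 1 n, R k ω * Y k ω} := by
    intro n ω hω
    by_contra hcon
    simp only [mem_union, mem_ofPred_eq, not_or, not_lt, not_le] at hω hcon
    obtain ⟨hfreq_n, hdev⟩ := hcon
    rcases Nat.eq_zero_or_pos n with rfl | hn
    · simp at hω
    rw [le_div_iff₀ (by exact_mod_cast hn)] at hfreq_n
    have hsum : ∑ k ∈ Finset.Icc 1 n, R k ω * Y k ω
        = -t * ∑ k ∈ Finset.Icc 1 n, G (X k ω) * R k ω
          - log φ * ∑ k ∈ Finset.Icc 1 n, R k ω := by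
      simp only [Y, Finset.mul_sum, ← Finset.sum_sub_distrib]
      exact Finset.sum_congr rfl fun k _ => by ring
    nlinarith [ht.1]
  have hδ : 0 < δ := by linarith
  refine ne_top_of_le_ne_top
    (ENNReal.add_ne_top.2 ⟨hfreq, tsum_ofReal_exp_neg_mul_nat_ne_top hδ⟩) ?_
  rw [← ENNReal.tsum_add]
  refine ENNReal.tsum_le_tsum fun n => (measure_mono (hbad n)).trans
    ((measure_union_le _ _).trans (add_le_add le_rfl ?_))
  have hYm : ∀ k, 1 ≤ k → Measurable[F k] (Y k) := fun k hk => hg.comp (hX k hk)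
  simpa [neg_mul] using
    measure_le_sum_sampled_le_exp_neg F hR01 hR hYm hYindep hYexp (n * δ) n

lemma tsum_measure_sum_llr_sampled_lt_ne_top {ν' : Measure S} [IsFiniteMeasure ν']
    (hνν' : ν ≪ ν') (hllr : Integrable (llr ν ν') ν)
    (hX : ∀ n, 1 ≤ n → Measurable[F n] (X n)) (hlaw : ∀ n, 1 ≤ n → P.map (X n) = ν)
    (hindep : ∀ n, 1 ≤ n → Indep (MeasurableSpace.comap (X n) mS) (F (n - 1)) P)
    (hR01 : ∀ k ω, R k ω = 0 ∨ R k ω = 1) (hR : ∀ k, 1 ≤ k → Measurable[F (k - 1)] (R k))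
    (hGm : Measurable G) (hG : G =ᵐ[ν] llr ν ν')
    {θ ρ : ℝ} (hθ : 0 ≤ θ) (hρ : 0 < ρ) (hθρ : θ < ρ * ∫ x, llr ν ν' x ∂ν)
    (hfreq : ∑' n : ℕ, P {ω | (∑ k ∈ Finset.Icc 1 n, R k ω) / n < ρ} ≠ ⊤) :
    ∑' n : ℕ, P {ω | ∑ k ∈ Finset.Icc 1 n, G (X k ω) * R k ω < θ * n} ≠ ⊤ :=
  tsum_measure_sum_sampled_lt_ne_top F hX hlaw hindep hR01 hR hGm (hllr.congr hG.symm)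
    (integrable_exp_neg_of_ae_eq_llr hνν' hG) hθ hρ (by rwa [integral_congr_ae hG]) hfreq

end SingleSource

lemma sInf_le_add_tsum {Q : ℕ → Prop} {f : ℕ → ℝ≥0∞} {n₀ : ℕ} (hn₀ : 1 ≤ n₀)
    (h : ∀ n, n₀ ≤ n → Q n ∨ 1 ≤ f n) :
    sInf {t : ℝ≥0∞ | ∃ n : ℕ, t = n ∧ 1 ≤ n ∧ Q n} ≤ n₀ + ∑' n, f n := by
  by_cases hex : ∃ n, n₀ ≤ n ∧ Q n
  · classical
    obtain ⟨hle, hQ⟩ := Nat.find_spec hex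
    have hbad : ∀ m ∈ Finset.Ico n₀ (Nat.find hex), 1 ≤ f m := fun m hm =>
      have hm := Finset.mem_Ico.1 hm
      (h m hm.1).resolve_left fun hQm => Nat.find_min hex hm.2 ⟨hm.1, hQm⟩
    calc sInf {t : ℝ≥0∞ | ∃ n : ℕ, t = n ∧ 1 ≤ n ∧ Q n}
        ≤ (Nat.find hex : ℝ≥0∞) := sInf_le ⟨_, rfl, hn₀.trans hle, hQ⟩
      _ = n₀ + ∑ m ∈ Finset.Ico n₀ (Nat.find hex), 1 := by simp [hle]
      _ ≤ n₀ + ∑' n, f n := by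
        gcongr
        exact (Finset.sum_le_sum hbad).trans (ENNReal.sum_le_tsum _)
  · push Not at hex
    have htop : ∑' n, f n = ⊤ := top_unique <|
      calc ⊤ = ∑' _ : ℕ, (1 : ℝ≥0∞) := (ENNReal.tsum_const_eq_top_of_ne_zero one_ne_zero).symm
        _ ≤ ∑' n, f (n + n₀) := ENNReal.tsum_le_tsum fun n =>
          (h _ (by omega)).resolve_left (hex _ (by omega))
        _ ≤ ∑' n, f n := ENNReal.tsum_comp_le_tsum_of_injective (add_left_injective n₀) f
    simp [htop]

lemma lintegral_sInf_le_add_sum_tsum {Ω ι : Type*} [MeasurableSpace Ω] {P : Measure Ω}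
    [IsProbabilityMeasure P] [Fintype ι] {B : ι → ℕ → Set Ω}
    (hB : ∀ i n, MeasurableSet (B i n)) {Q : ℕ → Ω → Prop} {n₀ : ℕ} (hn₀ : 1 ≤ n₀)
    (hQ : ∀ n ω, n₀ ≤ n → (∀ i, ω ∉ B i n) → Q n ω) :
    ∫⁻ ω, sInf {t : ℝ≥0∞ | ∃ n : ℕ, t = n ∧ 1 ≤ n ∧ Q n ω} ∂P
      ≤ n₀ + ∑ i, ∑' n, P (B i n) := by
  have hind : ∀ i n, Measurable ((B i n).indicator (1 : Ω → ℝ≥0∞)) := fun i n =>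
    measurable_const.indicator (hB i n)
  calc ∫⁻ ω, sInf {t : ℝ≥0∞ | ∃ n : ℕ, t = n ∧ 1 ≤ n ∧ Q n ω} ∂P
      ≤ ∫⁻ ω, (n₀ + ∑' n, ∑ i, (B i n).indicator 1 ω) ∂P := by
        refine lintegral_mono fun ω => sInf_le_add_tsum hn₀ fun n hn => ?_
        by_cases hgood : ∀ i, ω ∉ B i n
        · exact Or.inl (hQ n ω hn hgood)
        · push Not at hgood
          obtain ⟨i, hi⟩ := hgood
          refine Or.inr ((Set.indicator_of_mem hi 1).symm.le.trans ?_)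
          exact Finset.single_le_sum (f := fun j => (B j n).indicator 1 ω) (fun _ _ => zero_le)
            (Finset.mem_univ i)
    _ = n₀ + ∑ i, ∑' n, P (B i n) := by
        rw [lintegral_add_left measurable_const, lintegral_const, measure_univ, mul_one,
          lintegral_tsum fun n => (Finset.measurable_sum _ fun i _ => hind i n).aemeasurable,
          ← Summable.tsum_finsetSum fun i _ => ENNReal.summable]
        simp_rw [lintegral_finsetSum _ fun i _ => hind i _, lintegral_indicator_one (hB _ _)]

lemma lintegral_sInf_le_ofReal_add {Ω ι : Type*} [MeasurableSpace Ω] {P : Measure Ω}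
    [IsProbabilityMeasure P] [Fintype ι] {B : ι → ℕ → Set Ω}
    (hB : ∀ i n, MeasurableSet (B i n)) (hBsum : ∀ i, ∑' n, P (B i n) ≠ ⊤)
    {Q : ℕ → Ω → Prop} {L : ℝ} (hL : 0 < L)
    (hQ : ∀ (n : ℕ) ω, L ≤ n → (∀ i, ω ∉ B i n) → Q n ω) :
    ∫⁻ ω, sInf {t : ℝ≥0∞ | ∃ n : ℕ, t = n ∧ 1 ≤ n ∧ Q n ω} ∂P
      ≤ ENNReal.ofReal (L + (1 + (∑ i, ∑' n, P (B i n)).toReal)) := by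
  calc _ ≤ ⌈L⌉₊ + ∑ i, ∑' n, P (B i n) :=
        lintegral_sInf_le_add_sum_tsum hB (Nat.lt_ceil.2 (by simpa using hL))
          fun n ω hn => hQ n ω ((Nat.le_ceil L).trans (by exact_mod_cast hn))
    _ = ENNReal.ofReal (⌈L⌉₊ + (∑ i, ∑' n, P (B i n)).toReal) := by
        rw [ENNReal.ofReal_add (by positivity) ENNReal.toReal_nonneg, ENNReal.ofReal_natCast,
          ENNReal.ofReal_toReal (ENNReal.sum_ne_top.2 fun i _ => hBsum i)]
    _ ≤ _ := ENNReal.ofReal_le_ofReal (by linarith [Nat.ceil_lt_add_one hL.le])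

theorem stmt_19_general {Ω : Type*} [mΩ : MeasurableSpace Ω] (P : Measure Ω) [IsProbabilityMeasure P]
    (M : ℕ)
    {S : Fin M → Type*} [mS : ∀ i, MeasurableSpace (S i)]
    (μ0 μ1 : ∀ i, Measure (S i))
    (hprob0 : ∀ i, IsProbabilityMeasure (μ0 i)) (hprob1 : ∀ i, IsProbabilityMeasure (μ1 i))
    -- the Kullback–Leibler numbers I_i and J_i are finite and positive
    (hac1 : ∀ i, μ1 i ≪ μ0 i) (hac0 : ∀ i, μ0 i ≪ μ1 i)
    (hint1 : ∀ i, Integrable (llr (μ1 i) (μ0 i)) (μ1 i))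
    (hint0 : ∀ i, Integrable (llr (μ0 i) (μ1 i)) (μ0 i))
    (II JJ : Fin M → ℝ)
    (hII : ∀ i, II i = ∫ x, llr (μ1 i) (μ0 i) x ∂(μ1 i))
    (hJJ : ∀ i, JJ i = ∫ x, llr (μ0 i) (μ1 i) x ∂(μ0 i))
    (hIpos : ∀ i, 0 < II i) (hJpos : ∀ i, 0 < JJ i)
    -- the subset of anomalous sources: nonempty and proper
    (A : Finset (Fin M)) (hA : A.Nonempty) (hAc : Aᶜ.Nonempty)
    -- the filtration
    (F : Filtration ℕ mΩ)
    -- the observations: mutually independent sequences of i.i.d. random elements, with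
    -- X_i(n) ~ μ1_i when i ∈ A and X_i(n) ~ μ0_i when i ∉ A, adapted and with the vector
    -- of time-n observations independent of the past
    (X : ∀ i : Fin M, ℕ → Ω → S i)
    (hXmeas : ∀ i, ∀ n : ℕ, 1 ≤ n → Measurable[F n] (X i n))
    (hXlaw : ∀ i, ∀ n : ℕ, 1 ≤ n →
      Measure.map (X i n) P = if i ∈ A then μ1 i else μ0 i)
    (hXindep : ∀ n : ℕ, 1 ≤ n →
      Indep (⨆ i : Fin M, MeasurableSpace.comap (X i n) (mS i)) (F (n - 1)) P)
    -- the sampling indicators, previsible and {0,1}-valued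
    (R : Fin M → ℕ → Ω → ℝ)
    (hR01 : ∀ i n ω, R i n ω = 0 ∨ R i n ω = 1)
    (hRmeas : ∀ i, ∀ n : ℕ, 1 ≤ n → Measurable[F (n - 1)] (R i n))
    -- hypothesis: constants c_i ∈ (0,1] such that for every ρ ∈ (0, c_i) the probabilities
    -- P(π_i(n) < ρ) are summable
    (c : Fin M → ℝ)
    (hfreq : ∀ i : Fin M, ∀ ρ ∈ Set.Ioo (0:ℝ) (c i),
      (∑' n : ℕ, P {ω | (∑ m ∈ Finset.Icc 1 n, R i m ω) / n < ρ}) < ⊤) :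
    -- conclusion: for all small enough ε > 0 there is a finite constant C_ε such that
    -- for all thresholds a, b > 0 the expectation of the stopping time
    -- T(a,b) = inf{n ≥ 1 : Λ_i(n) ∉ (-a,b) for every i} satisfies the stated bound
    ∀ ε : ℝ, 0 < ε →
      (∀ i ∈ A, 0 < (c i - ε) * II i - ε) →
      (∀ j ∈ Aᶜ, 0 < (c j - ε) * JJ j - ε) →
      ∃ C : ℝ, ∀ a b : ℝ, 0 < a → 0 < b →
        (∫⁻ ω, sInf {t : ℝ≥0∞ | ∃ n : ℕ, t = (n : ℝ≥0∞) ∧ 1 ≤ n ∧ ∀ i : Fin M,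
            (∑ k ∈ Finset.Icc 1 n, llr (μ1 i) (μ0 i) (X i k ω) * R i k ω)
              ∉ Set.Ioo (-a) b} ∂P)
          ≤ ENNReal.ofReal
              (max (A.sup' hA fun i => b / ((c i - ε) * II i - ε))
                   (Aᶜ.sup' hAc fun j => a / ((c j - ε) * JJ j - ε)) + C) := by
  intro ε hε hθA hθAc
  set G : ∀ i, S i → ℝ := fun i x =>
    if i ∈ A then llr (μ1 i) (μ0 i) x else -llr (μ1 i) (μ0 i) x
  set θ : Fin M → ℝ := fun i => if i ∈ A then (c i - ε) * II i - ε else (c i - ε) * JJ i - ε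
  set B : Fin M → ℕ → Set Ω := fun i n =>
    {ω | ∑ k ∈ Finset.Icc 1 n, G i (X i k ω) * R i k ω < θ i * n}
  have hGm : ∀ i, Measurable (G i) := fun i => by
    by_cases hi : i ∈ A <;> simp [G, hi] <;> fun_prop
  have hB : ∀ i n, MeasurableSet (B i n) := fun i n =>
    measurableSet_lt (Finset.measurable_sum _ fun k hk =>
      ((hGm i).comp ((hXmeas i k (Finset.mem_Icc.1 hk).1).mono (F.le k) le_rfl)).mul
        ((hRmeas i k (Finset.mem_Icc.1 hk).1).mono (F.le _) le_rfl)) measurable_const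
  have hindep : ∀ i n, 1 ≤ n → Indep (MeasurableSpace.comap (X i n) (mS i)) (F (n - 1)) P :=
    fun i n hn => indep_of_indep_of_le_left (hXindep n hn)
      (le_iSup (fun j => MeasurableSpace.comap (X j n) (mS j)) i)
  have hsum : ∀ i, ∑' n, P (B i n) ≠ ⊤ := by
    intro i
    by_cases hi : i ∈ A
    · have hρ : 0 < c i - ε := pos_of_mul_pos_left (by linarith [hθA i hi]) (hIpos i).le
      exact tsum_measure_sum_llr_sampled_lt_ne_top F (hac1 i) (hint1 i) (hXmeas i)
        (fun n hn => by simpa [hi] using hXlaw i n hn) (hindep i) (hR01 i) (hRmeas i) (hGm i)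
        (by simp [G, hi]) (by simp [θ, hi]; linarith [hθA i hi]) hρ
        (by simpa [θ, hi, ← hII] using hε) (hfreq i _ ⟨hρ, by linarith⟩).ne
    · have hj := Finset.mem_compl.2 hi
      have hρ : 0 < c i - ε := pos_of_mul_pos_left (by linarith [hθAc i hj]) (hJpos i).le
      exact tsum_measure_sum_llr_sampled_lt_ne_top F (hac0 i) (hint0 i) (hXmeas i)
        (fun n hn => by simpa [hi] using hXlaw i n hn) (hindep i) (hR01 i) (hRmeas i) (hGm i)
        (by filter_upwards [neg_llr (hac0 i)] with x hx
            simp only [G, hi, if_false, ← hx, Pi.neg_apply, neg_neg])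
        (by simp [θ, hi]; linarith [hθAc i hj]) hρ
        (by simpa [θ, hi, ← hJJ] using hε) (hfreq i _ ⟨hρ, by linarith⟩).ne
  refine ⟨1 + (∑ i, ∑' n, P (B i n)).toReal, fun a b ha hb => ?_⟩
  have hL := (div_pos hb (hθA _ hA.choose_spec)).trans_le
    ((Finset.le_sup' (fun i => b / ((c i - ε) * II i - ε)) hA.choose_spec).trans
      (le_max_left _ (Aᶜ.sup' hAc fun j => a / ((c j - ε) * JJ j - ε))))
  refine lintegral_sInf_le_ofReal_add hB hsum hL fun n ω hnL hgood i => ?_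
  have hgi := hgood i
  simp only [B, mem_ofPred_eq, not_lt] at hgi
  by_cases hi : i ∈ A
  · have hbn := (Finset.le_sup' (fun i => b / ((c i - ε) * II i - ε)) hi).trans
      ((le_max_left _ _).trans hnL)
    rw [div_le_iff₀ (hθA i hi)] at hbn
    simp only [G, θ, hi, if_true] at hgi
    exact fun h => h.2.not_ge (by linarith)
  · have hj := Finset.mem_compl.2 hi
    have han := (Finset.le_sup' (fun j => a / ((c j - ε) * JJ j - ε)) hj).trans
      ((le_max_right _ _).trans hnL)
    rw [div_le_iff₀ (hθAc i hj)] at han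
    simp only [G, θ, hi, if_false, neg_mul, Finset.sum_neg_distrib] at hgi
    exact fun h => h.1.not_ge (by linarith)

theorem stmt_19 {Ω : Type*} [mΩ : MeasurableSpace Ω] (P : Measure Ω) [IsProbabilityMeasure P]
    (M : ℕ) (hM : 2 ≤ M)
    {S : Fin M → Type*} [mS : ∀ i, MeasurableSpace (S i)]
    (μ0 μ1 : ∀ i, Measure (S i))
    (hprob0 : ∀ i, IsProbabilityMeasure (μ0 i)) (hprob1 : ∀ i, IsProbabilityMeasure (μ1 i))
    -- the Kullback–Leibler numbers I_i and J_i are finite and positive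
    (hac1 : ∀ i, μ1 i ≪ μ0 i) (hac0 : ∀ i, μ0 i ≪ μ1 i)
    (hint1 : ∀ i, Integrable (llr (μ1 i) (μ0 i)) (μ1 i))
    (hint0 : ∀ i, Integrable (llr (μ0 i) (μ1 i)) (μ0 i))
    (II JJ : Fin M → ℝ)
    (hII : ∀ i, II i = ∫ x, llr (μ1 i) (μ0 i) x ∂(μ1 i))
    (hJJ : ∀ i, JJ i = ∫ x, llr (μ0 i) (μ1 i) x ∂(μ0 i))
    (hIpos : ∀ i, 0 < II i) (hJpos : ∀ i, 0 < JJ i)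
    -- the subset of anomalous sources: nonempty and proper
    (A : Finset (Fin M)) (hA : A.Nonempty) (hAc : Aᶜ.Nonempty)
    -- the filtration
    (F : Filtration ℕ mΩ)
    -- the observations: mutually independent sequences of i.i.d. random elements, with
    -- X_i(n) ~ μ1_i when i ∈ A and X_i(n) ~ μ0_i when i ∉ A, adapted and with the vector
    -- of time-n observations independent of the past
    (X : ∀ i : Fin M, ℕ → Ω → S i)
    (hXmeas : ∀ i, ∀ n : ℕ, 1 ≤ n → Measurable[F n] (X i n))
    (hXlaw : ∀ i, ∀ n : ℕ, 1 ≤ n →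
      Measure.map (X i n) P = if i ∈ A then μ1 i else μ0 i)
    (hXiid : iIndepFun (m := fun p : Fin M × ℕ => mS p.1) (fun p ω => X p.1 p.2 ω) P)
    (hXindep : ∀ n : ℕ, 1 ≤ n →
      Indep (⨆ i : Fin M, MeasurableSpace.comap (X i n) (mS i)) (F (n - 1)) P)
    -- the sampling indicators, previsible and {0,1}-valued
    (R : Fin M → ℕ → Ω → ℝ)
    (hR01 : ∀ i n ω, R i n ω = 0 ∨ R i n ω = 1)
    (hRmeas : ∀ i, ∀ n : ℕ, 1 ≤ n → Measurable[F (n - 1)] (R i n))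
    -- hypothesis: constants c_i ∈ (0,1] such that for every ρ ∈ (0, c_i) the probabilities
    -- P(π_i(n) < ρ) are summable
    (c : Fin M → ℝ) (hc : ∀ i, c i ∈ Set.Ioc (0:ℝ) 1)
    (hfreq : ∀ i : Fin M, ∀ ρ ∈ Set.Ioo (0:ℝ) (c i),
      (∑' n : ℕ, P {ω | (∑ m ∈ Finset.Icc 1 n, R i m ω) / n < ρ}) < ⊤) :
    -- conclusion: for all small enough ε > 0 there is a finite constant C_ε such that
    -- for all thresholds a, b > 0 the expectation of the stopping time
    -- T(a,b) = inf{n ≥ 1 : Λ_i(n) ∉ (-a,b) for every i} satisfies the stated bound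
    ∀ ε : ℝ, 0 < ε →
      (∀ i ∈ A, 0 < (c i - ε) * II i - ε) →
      (∀ j ∈ Aᶜ, 0 < (c j - ε) * JJ j - ε) →
      ∃ C : ℝ, ∀ a b : ℝ, 0 < a → 0 < b →
        (∫⁻ ω, sInf {t : ℝ≥0∞ | ∃ n : ℕ, t = (n : ℝ≥0∞) ∧ 1 ≤ n ∧ ∀ i : Fin M,
            (∑ k ∈ Finset.Icc 1 n, llr (μ1 i) (μ0 i) (X i k ω) * R i k ω)
              ∉ Set.Ioo (-a) b} ∂P)
          ≤ ENNReal.ofReal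
              (max (A.sup' hA fun i => b / ((c i - ε) * II i - ε))
                   (Aᶜ.sup' hAc fun j => a / ((c j - ε) * JJ j - ε)) + C) :=
  stmt_19_general (mΩ := mΩ) P M (mS := mS) μ0 μ1 hprob0 hprob1 hac1 hac0 hint1 hint0 II JJ hII hJJ
    hIpos hJpos A hA hAc F X hXmeas hXlaw hXindep R hR01 hRmeas c hfreq
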